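/- There exist constants c > 0 and R₀ > 0, independent of R, such that for every R ≥ R₀ there is a point k̃_R ∈ [R − c, R) with U_R''(r) > 0 for all r ∈ [k̃_R, R]; that is, U_R is strictly convex in a boundary layer of uniformly bounded width near r = R. -/

import Mathlib

set_option maxHeartbeats 1000000

open Filter Set MeasureTheory

noncomputable section

lemma mono_aux (φ φ' : ℝ → ℝ) (x y : ℝ) (hxy : x ≤ y)
    (hc : ContinuousOn φ (Icc x y))
    (hd : ∀ t ∈ Ioo x y, HasDerivAt φ (φ' t) t)
    (h0 : ∀ t ∈ Ioo x y, 0 ≤ φ' t) : φ x ≤ φ y := by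
  have hmono := monotoneOn_of_deriv_nonneg (convex_Icc x y) hc
    (fun t ht => by
      rw [interior_Icc] at ht
      exact (hd t ht).differentiableAt.differentiableWithinAt)
    (fun t ht => by
      rw [interior_Icc] at ht
      rw [(hd t ht).deriv]; exact h0 t ht)
  exact hmono (left_mem_Icc.2 hxy) (right_mem_Icc.2 hxy) hxy

lemma slope_le_aux (φ φ' : ℝ → ℝ) (x y K : ℝ) (hxy : x ≤ y)
    (hc : ContinuousOn φ (Icc x y))
    (hd : ∀ t ∈ Ioo x y, HasDerivAt φ (φ' t) t)
    (hK : ∀ t ∈ Ioo x y, φ' t ≤ K) : φ y - φ x ≤ K * (y - x) := by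
  have := mono_aux (fun t => K * t - φ t) (fun t => K - φ' t) x y hxy
    (by fun_prop)
    (fun t ht => by have h := ((hasDerivAt_id t).const_mul K).sub (hd t ht); rw [mul_one] at h; exact h)
    (fun t ht => by have := hK t ht; simpa using this)
  nlinarith [this]

lemma slope_ge_aux (φ φ' : ℝ → ℝ) (x y m : ℝ) (hxy : x ≤ y)
    (hc : ContinuousOn φ (Icc x y))
    (hd : ∀ t ∈ Ioo x y, HasDerivAt φ (φ' t) t)
    (hm : ∀ t ∈ Ioo x y, m ≤ φ' t) : m * (y - x) ≤ φ y - φ x := by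
  have := mono_aux (fun t => φ t - m * t) (fun t => φ' t - m) x y hxy
    (by fun_prop)
    (fun t ht => by have h := (hd t ht).sub ((hasDerivAt_id t).const_mul m); rw [mul_one] at h; exact h)
    (fun t ht => by have := hm t ht; simpa using this)
  nlinarith [this]

lemma deriv_lb_aux (f : ℝ → ℝ) (hf : Differentiable ℝ f) (c : ℝ)
    (hc : ∀ t, c ≤ deriv f t) (s t : ℝ) (hst : s ≤ t) :
    c * (t - s) ≤ f t - f s :=
  slope_ge_aux f (deriv f) s t c hst hf.continuous.continuousOn
    (fun u _ => (hf u).hasDerivAt) (fun u _ => hc u)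

lemma mono_of_deriv_lb (f : ℝ → ℝ) (hf : Differentiable ℝ f) (c : ℝ) (hc0 : 0 ≤ c)
    (hc : ∀ t, c ≤ deriv f t) : Monotone f := by
  intro s t hst
  have := deriv_lb_aux f hf c hc s t hst
  nlinarith

lemma aderiv_bound (a b : ℝ → ℝ) (kstar : ℝ) (hk0 : 0 < kstar) (hk1 : kstar < 1)
    (hda : Continuous (deriv a)) (hdb : Continuous (deriv b))
    (hdda : Continuous (deriv (deriv a))) (L : ℝ)
    (hL : Tendsto (fun R : ℝ => sSup ((fun r : ℝ =>
      R * (|deriv a r| + |deriv b r|) + R ^ 2 * |deriv (deriv a) r|) '' Set.Ico (kstar * R) R))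
      atTop (nhds L)) :
    ∃ R₂ ≥ (1:ℝ), ∀ r ≥ R₂, |deriv a r| ≤ (L + 1) / r := by
  have hev : ∀ᶠ R in atTop, sSup ((fun r : ℝ =>
      R * (|deriv a r| + |deriv b r|) + R ^ 2 * |deriv (deriv a) r|) '' Set.Ico (kstar * R) R)
      ≤ L + 1 := hL.eventually (eventually_le_nhds (by linarith))
  obtain ⟨R₂', hR₂'⟩ := eventually_atTop.mp hev
  refine ⟨max R₂' 1, le_max_right _ _, fun r hr => ?_⟩
  have hr1 : (1:ℝ) ≤ r := le_trans (le_max_right _ _) hr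
  have hrpos : 0 < r := by linarith
  set R := r / kstar with hRdef
  have hrR : r < R := by
    rw [hRdef, lt_div_iff₀ hk0]; nlinarith
  have hRge : R₂' ≤ R := le_trans (le_trans (le_max_left _ _) hr) hrR.le
  have hsup := hR₂' R hRge
  have hmem : r ∈ Set.Ico (kstar * R) R := by
    constructor
    · rw [hRdef]; rw [mul_div_cancel₀ _ (ne_of_gt hk0)]
    · exact hrR
  have hbdd : BddAbove ((fun r : ℝ =>
      R * (|deriv a r| + |deriv b r|) + R ^ 2 * |deriv (deriv a) r|) '' Set.Ico (kstar * R) R) := by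
    apply BddAbove.mono (Set.image_mono Set.Ico_subset_Icc_self)
    exact (isCompact_Icc.image_of_continuousOn (by fun_prop)).bddAbove
  have hle : R * (|deriv a r| + |deriv b r|) + R ^ 2 * |deriv (deriv a) r| ≤ L + 1 :=
    le_trans (le_csSup hbdd ⟨r, hmem, rfl⟩) hsup
  have hRpos : 0 < R := lt_trans hrpos hrR
  have h1 : r * |deriv a r| ≤ L + 1 := by
    nlinarith [abs_nonneg (deriv a r), abs_nonneg (deriv b r),
      abs_nonneg (deriv (deriv a) r), sq_nonneg R]
  rw [le_div_iff₀ hrpos]; linarith [h1]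

/-- `g` is locally `τ`-Hölder continuous on `S`. -/
def LocHolderOn (τ : ℝ) (g : ℝ → ℝ) (S : Set ℝ) : Prop :=
  ∀ K : Set ℝ, K ⊆ S → IsCompact K →
    ∃ C : ℝ, ∀ x ∈ K, ∀ y ∈ K, |g x - g y| ≤ C * |x - y| ^ τ

/-- Assumption (A1): `f ∈ C^{1,τ}_loc`, `inf f' > 0`, `f θ₀ = 0`. -/
def A1 (τ θ₀ : ℝ) (f : ℝ → ℝ) : Prop :=
  ContDiff ℝ 1 f ∧ LocHolderOn τ (deriv f) Set.univ ∧
    (∃ c > 0, ∀ t : ℝ, c ≤ deriv f t) ∧ f θ₀ = 0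

/-- Assumption (A2): `e ∈ C^{1,τ}_loc`, decreasing and strictly positive. -/
def A2 (τ : ℝ) (e : ℝ → ℝ) : Prop :=
  ContDiff ℝ 1 e ∧ LocHolderOn τ (deriv e) Set.univ ∧ Antitone e ∧ ∀ t : ℝ, 0 < e t

/-- Assumption (A3) for the coefficient pair `(a, b)`, with parameter `kstar ∈ (0,1)`. -/
def A3 (N : ℕ) (τ kstar : ℝ) (a b : ℝ → ℝ) : Prop :=
  ContDiff ℝ 2 a ∧ ContDiff ℝ 1 b ∧
  LocHolderOn τ (deriv (deriv a)) (Set.Ici 0) ∧ LocHolderOn τ (deriv b) (Set.Ici 0) ∧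
  (∃ M : ℝ, ∀ r : ℝ, 0 ≤ r → a r ≤ M ∧ b r ≤ M) ∧
  (∃ c > 0, ∀ r : ℝ, 0 ≤ r → c ≤ a r ∧ c ≤ b r) ∧
  MonotoneOn (fun r : ℝ => r ^ (N - 1) * b r) (Set.Ioi 0) ∧
  kstar ∈ Set.Ioo (0:ℝ) 1 ∧
  (∃ L > 0, Tendsto
    (fun R : ℝ => sSup ((fun r : ℝ =>
      R * (|deriv a r| + |deriv b r|) + R ^ 2 * |deriv (deriv a) r|) '' Set.Ico (kstar * R) R))
    atTop (nhds L))

/-- `U`, with derivative `U'`, is a solution of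
`(r^{N-1} a U')' = r^{N-1} b f(U)` on `(0,R)`, `r^{N-1} a U' → 0` as `r → 0⁺`,
`U'(R) = e(U(R))`, of class `C¹((0,R]) ∩ C^∞((0,R))`, continuous up to `[0,R]`. -/
def IsSol (N : ℕ) (f e a b : ℝ → ℝ) (R : ℝ) (U U' : ℝ → ℝ) : Prop :=
  ContinuousOn U (Set.Icc 0 R) ∧
  (∀ r ∈ Set.Ioc (0:ℝ) R, HasDerivWithinAt U (U' r) (Set.Icc 0 R) r) ∧
  ContinuousOn U' (Set.Ioc 0 R) ∧
  ContDiffOn ℝ (⊤ : ℕ∞) U (Set.Ioo 0 R) ∧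
  (∀ r ∈ Set.Ioo (0:ℝ) R,
    HasDerivAt (fun s : ℝ => s ^ (N - 1) * a s * U' s) (r ^ (N - 1) * b r * f (U r)) r) ∧
  Tendsto (fun r : ℝ => r ^ (N - 1) * a r * U' r) (nhdsWithin 0 (Set.Ioi 0)) (nhds 0) ∧
  U' R = e (U R)

/-- The primitive `F(t) = ∫₀ᵗ f(s) ds`. -/
def Fo (f : ℝ → ℝ) (t : ℝ) : ℝ := ∫ s in (0:ℝ)..t, f s

/-- `u`, with derivative `u'`, is a solution of the rescaled singularly perturbed problem
`ε² (u'' + ((N−1)/s + α_ε'/α_ε) u') = (β_ε/α_ε) f(u)` on `(0,1)`, `u'(0) = 0`,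
`ε u'(1) = e(u(1))`, where `α_ε(s) = a(s/ε)`, `β_ε(s) = b(s/ε)`; it also records
the facts `u ≥ θ₀` and `u' ≥ 0` on `[0,1]`. -/
def IsSolE (N : ℕ) (f e a b : ℝ → ℝ) (θ₀ ε : ℝ) (u u' : ℝ → ℝ) : Prop :=
  ContinuousOn u (Set.Icc 0 1) ∧
  (∀ s ∈ Set.Ioc (0:ℝ) 1, HasDerivWithinAt u (u' s) (Set.Icc 0 1) s) ∧
  ContinuousOn u' (Set.Ioc 0 1) ∧
  ContDiffOn ℝ (⊤ : ℕ∞) u (Set.Ioo 0 1) ∧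
  (∀ s ∈ Set.Ioo (0:ℝ) 1, ∃ d : ℝ, HasDerivAt u' d s ∧
    ε ^ 2 * (d + (((N:ℝ) - 1) / s + deriv (fun t : ℝ => a (t / ε)) s / a (s / ε)) * u' s)
      = b (s / ε) / a (s / ε) * f (u s)) ∧
  u' 0 = 0 ∧
  ε * u' 1 = e (u 1) ∧
  (∀ s ∈ Set.Icc (0:ℝ) 1, θ₀ ≤ u s ∧ 0 ≤ u' s)

/-- strict convexity of `U_R` in a boundary layer of uniformly bounded
width near `r = R`. -/
theorem stmt_3 (N : ℕ) (hN : 2 ≤ N) (τ θ₀ kstar : ℝ) (hτ : τ ∈ Set.Ioo (0:ℝ) 1)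
    (f e a b : ℝ → ℝ) (hf : A1 τ θ₀ f) (he : A2 τ e) (hab : A3 N τ kstar a b)
    (μ₀ : ℝ) (hμ : 0 < μ₀)
    (hH : Tendsto (fun R : ℝ => R * (b R / a R - μ₀)) atTop (nhds 0)) :
    ∃ c > 0, ∃ R₀ > 0, ∀ R ≥ R₀, ∀ U U' : ℝ → ℝ,
      IsSol N f e a b R U U' → (∀ r ∈ Set.Icc (0:ℝ) R, θ₀ ≤ U r) →
      ∃ ktil ∈ Set.Ico (R - c) R, ∀ r ∈ Set.Icc ktil R,
        ∃ d > 0, HasDerivWithinAt U' d (Set.Icc 0 R) r := by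
  obtain ⟨hf1, -, ⟨c₀, hc₀, hfd⟩, hfθ⟩ := hf
  obtain ⟨he1, -, heA, hepos⟩ := he
  obtain ⟨ha2, hb1, -, -, ⟨M, hM⟩, ⟨ca, hcapos, hca⟩, -, hk, ⟨L, hLpos, hL⟩⟩ := hab
  obtain ⟨hk0, hk1⟩ := hk
  -- continuity and differentiability facts
  have hacont : Continuous a := ha2.continuous
  have hbcont : Continuous b := hb1.continuous
  have hfcont : Continuous f := hf1.continuous
  have hfdiff : Differentiable ℝ f := hf1.differentiable one_ne_zero
  have hadiff : Differentiable ℝ a := ha2.differentiable (by norm_num)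
  have hda_cont : Continuous (deriv a) := ha2.continuous_deriv (by norm_num)
  have hdb_cont : Continuous (deriv b) := hb1.continuous_deriv le_rfl
  have hda1 : ContDiff ℝ 1 (deriv a) := by
    have : ContDiff ℝ (1 + 1 : ℕ) a := by norm_num; exact ha2
    exact (contDiff_succ_iff_deriv.mp (by exact_mod_cast this)).2.2
  have hdda_cont : Continuous (deriv (deriv a)) := hda1.continuous_deriv le_rfl
  -- basic constants
  have hMpos : 0 < M := lt_of_lt_of_le hcapos (le_trans (hca 0 le_rfl).1 (hM 0 le_rfl).1)
  have hfmono : Monotone f := mono_of_deriv_lb f hfdiff c₀ hc₀.le hfd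
  have hflb : ∀ t, θ₀ ≤ t → c₀ * (t - θ₀) ≤ f t := by
    intro t ht
    have := deriv_lb_aux f hfdiff c₀ hfd θ₀ t ht
    rw [hfθ] at this; linarith
  have hfnn : ∀ t, θ₀ ≤ t → 0 ≤ f t := by
    intro t ht; have := hflb t ht; nlinarith
  have heθ : 0 < e θ₀ := hepos θ₀
  set C₄ : ℝ := 2 ^ (N - 1) * M * e θ₀ / ca with hC₄def
  have hC₄ : 0 < C₄ := by positivity
  set e₂ : ℝ := e (θ₀ + 2 * C₄) with he₂def
  have he₂ : 0 < e₂ := hepos _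
  set f₂ : ℝ := f (θ₀ + 2 * C₄) with hf₂def
  have hf₂ : 0 < f₂ := by
    have := hflb (θ₀ + 2 * C₄) (by linarith)
    nlinarith
  set δ : ℝ := min 1 (ca * e₂ / (2 * M * f₂)) with hδdef
  have hδpos : 0 < δ := lt_min one_pos (by positivity)
  have hδ1 : δ ≤ 1 := min_le_left _ _
  have hδ2 : δ * M * f₂ ≤ ca * e₂ / 2 := by
    have h := min_le_right 1 (ca * e₂ / (2 * M * f₂))
    have : δ * (M * f₂) ≤ (ca * e₂ / (2 * M * f₂)) * (M * f₂) := by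
      apply mul_le_mul_of_nonneg_right h (by positivity)
    calc δ * M * f₂ = δ * (M * f₂) := by ring
    _ ≤ (ca * e₂ / (2 * M * f₂)) * (M * f₂) := this
    _ = ca * e₂ / 2 := by field_simp
  set m : ℝ := ca * e₂ / (2 * M) with hmdef
  have hmpos : 0 < m := by positivity
  set κ : ℝ := δ * min C₄ (m / 2) with hκdef
  have hκpos : 0 < κ := by
    apply mul_pos hδpos (lt_min hC₄ (by positivity))
  set φ : ℝ := c₀ * κ with hφdef
  have hφpos : 0 < φ := mul_pos hc₀ hκpos
  obtain ⟨R₂, hR₂1, hR₂⟩ := aderiv_bound a b kstar hk0 hk1 hda_cont hdb_cont hdda_cont L hL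
  set C₅ : ℝ := 2 * ((N : ℝ) - 1 + (L + 1) / ca) with hC₅def
  have hNR : (1:ℝ) ≤ (N:ℝ) - 1 := by
    have : (2:ℝ) ≤ (N:ℝ) := by exact_mod_cast hN
    linarith
  have hC₅pos : 0 < C₅ := by
    have : 0 < (L + 1) / ca := by positivity
    nlinarith
  set R₀ : ℝ := max (max (2 * R₂) (2 * δ + 2)) (C₅ * C₄ * M / (ca * φ) + 1) with hR₀def
  refine ⟨δ / 2, by positivity, R₀, ?_, ?_⟩
  · calc (0:ℝ) < 2 * δ + 2 := by linarith
    _ ≤ max (2 * R₂) (2 * δ + 2) := le_max_right _ _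
    _ ≤ R₀ := le_max_left _ _
  intro R hR U U' hsol hUθ
  obtain ⟨hUc, hUd, hU'c, hUsm, hODE, hlim0, hUe⟩ := hsol
  -- basic facts about R
  have hRa : 2 * R₂ ≤ R := le_trans (le_trans (le_max_left _ _) (le_max_left _ _)) hR
  have hRb : 2 * δ + 2 ≤ R := le_trans (le_trans (le_max_right _ _) (le_max_left _ _)) hR
  have hRc : C₅ * C₄ * M / (ca * φ) + 1 ≤ R := le_trans (le_max_right _ _) hR
  have hRpos : 0 < R := by linarith
  have hR2pos : 0 < R / 2 := by linarith
  -- the flux function w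
  set w : ℝ → ℝ := fun s => s ^ (N - 1) * a s * U' s with hwdef
  -- interior derivative of U
  have hUder : ∀ r ∈ Ioo (0:ℝ) R, HasDerivAt U (U' r) r := by
    intro r hr
    exact (hUd r ⟨hr.1, hr.2.le⟩).hasDerivAt (Icc_mem_nhds hr.1 hr.2)
  -- positivity of a
  have hapos : ∀ r : ℝ, 0 ≤ r → 0 < a r := fun r hr => lt_of_lt_of_le hcapos (hca r hr).1
  have hbpos : ∀ r : ℝ, 0 ≤ r → 0 < b r := fun r hr => lt_of_lt_of_le hcapos (hca r hr).2
  -- w is monotone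
  have hwmono : ∀ u v : ℝ, 0 < u → u ≤ v → v ≤ R → w u ≤ w v := by
    intro u v hu huv hvR
    apply mono_aux w (fun s => s ^ (N - 1) * b s * f (U s)) u v huv
    · apply ContinuousOn.mul
      · exact ((continuous_pow (N-1)).continuousOn).mul hacont.continuousOn
      · exact hU'c.mono (fun x hx => ⟨lt_of_lt_of_le hu hx.1, le_trans hx.2 hvR⟩)
    · intro t ht
      exact hODE t ⟨lt_trans hu ht.1, lt_of_lt_of_le ht.2 hvR⟩
    · intro t ht
      have ht0 : 0 < t := lt_trans hu ht.1
      have htR : t ≤ R := le_trans ht.2.le hvR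
      have := hfnn (U t) (hUθ t ⟨ht0.le, htR⟩)
      have := (hbpos t ht0.le).le
      positivity
  -- w is nonnegative, hence U' ≥ 0
  have hwnn : ∀ r ∈ Ioc (0:ℝ) R, 0 ≤ w r := by
    intro r hr
    apply le_of_tendsto hlim0
    filter_upwards [Ioc_mem_nhdsGT_of_mem (by exact ⟨le_rfl, hr.1⟩ : (0:ℝ) ∈ Ico (0:ℝ) r)]
      with s hs
    exact hwmono s r hs.1 hs.2 hr.2
  have hU'nn : ∀ r ∈ Ioc (0:ℝ) R, 0 ≤ U' r := by
    intro r hr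
    have hw : 0 ≤ r ^ (N - 1) * a r * U' r := hwnn r hr
    have hg : 0 < r ^ (N - 1) * a r := mul_pos (pow_pos hr.1 _) (hapos r hr.1.le)
    by_contra hneg
    push_neg at hneg
    have := mul_neg_of_pos_of_neg hg hneg
    linarith
  -- U monotone on [0, R]
  have hUmono : MonotoneOn U (Icc 0 R) := by
    apply monotoneOn_of_deriv_nonneg (convex_Icc 0 R) hUc
    · intro t ht
      rw [interior_Icc] at ht
      exact (hUder t ht).differentiableAt.differentiableWithinAt
    · intro t ht
      rw [interior_Icc] at ht
      rw [(hUder t ht).deriv]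
      exact hU'nn t ⟨ht.1, ht.2.le⟩
  have hURθ : θ₀ ≤ U R := hUθ R ⟨hRpos.le, le_rfl⟩
  have heUR : 0 < U' R := by rw [hUe]; exact hepos _
  have heURe : U' R ≤ e θ₀ := by rw [hUe]; exact heA hURθ
  -- upper bound for U' on [R/2, R]
  have hU'ub : ∀ r : ℝ, R / 2 ≤ r → r ≤ R → U' r ≤ C₄ := by
    intro r hr1 hr2
    have hr0 : 0 < r := lt_of_lt_of_le hR2pos hr1
    have hw1 : w r ≤ w R := hwmono r R hr0 hr2 le_rfl
    have hwR : w R ≤ R ^ (N - 1) * M * e θ₀ := by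
      have h1 : a R ≤ M := (hM R hRpos.le).1
      have h2 : (0:ℝ) ≤ R ^ (N - 1) := by positivity
      calc w R = R ^ (N - 1) * a R * U' R := rfl
      _ ≤ R ^ (N - 1) * M * e θ₀ := by
          apply mul_le_mul (by nlinarith [heUR]) heURe heUR.le (by positivity)
    have hwr : (R / 2) ^ (N - 1) * ca * U' r ≤ w r := by
      have hp : (R / 2) ^ (N - 1) ≤ r ^ (N - 1) := pow_le_pow_left₀ hR2pos.le hr1 _
      have hU'r : 0 ≤ U' r := hU'nn r ⟨hr0, hr2⟩
      have haca : ca ≤ a r := (hca r hr0.le).1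
      calc (R / 2) ^ (N - 1) * ca * U' r ≤ r ^ (N - 1) * a r * U' r := by
            exact mul_le_mul (mul_le_mul hp haca hcapos.le (by positivity)) le_rfl hU'r
              (mul_nonneg (pow_nonneg hr0.le _) (hapos r hr0.le).le)
      _ = w r := rfl
    have hRpow : R ^ (N - 1) = 2 ^ (N - 1) * (R / 2) ^ (N - 1) := by
      rw [← mul_pow]; congr 1; ring
    have hhalfpow : (0:ℝ) < (R / 2) ^ (N - 1) := by positivity
    have key : (R / 2) ^ (N - 1) * ca * U' r ≤ 2 ^ (N - 1) * (R / 2) ^ (N - 1) * M * e θ₀ := by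
      rw [← hRpow]; linarith [hw1, hwR, hwr]
    rw [hC₄def]
    rw [le_div_iff₀ hcapos]
    nlinarith [key, hhalfpow]
  -- lower bound θ₀ + κ ≤ U r on [R - δ/2, R]
  have hRδ2 : R / 2 ≤ R - δ := by linarith
  have hUlow : ∀ r ∈ Icc (R - δ / 2) R, θ₀ + κ ≤ U r := by
    have hκC₄ : κ ≤ δ * C₄ := mul_le_mul_of_nonneg_left (min_le_left _ _) hδpos.le
    have hκm : κ ≤ δ * (m / 2) := mul_le_mul_of_nonneg_left (min_le_right _ _) hδpos.le
    by_cases hcase : θ₀ + 2 * δ * C₄ ≤ U R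
    · -- Case 1: U R is well above θ₀
      intro r hr
      have hr0 : 0 < r := by linarith [hr.1]
      have hsl := slope_le_aux U U' r R C₄ hr.2
        (hUc.mono (fun x hx => ⟨by linarith [hx.1], hx.2⟩))
        (fun t ht => hUder t ⟨lt_trans hr0 ht.1, ht.2⟩)
        (fun t ht => hU'ub t (by linarith [ht.1, hr.1]) ht.2.le)
      have hRr : R - r ≤ δ / 2 := by linarith [hr.1]
      have : C₄ * (R - r) ≤ C₄ * (δ / 2) := mul_le_mul_of_nonneg_left hRr hC₄.le
      linarith [hsl, hcase, hκC₄, this]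
    · -- Case 2: boundary layer
      push_neg at hcase
      have hURub : U R ≤ θ₀ + 2 * C₄ := by
        have : δ * C₄ ≤ 1 * C₄ := mul_le_mul_of_nonneg_right hδ1 hC₄.le
        nlinarith [hcase, this]
      have heUR2 : e₂ ≤ U' R := by rw [hUe]; exact heA hURub
      have hU'lb : ∀ s ∈ Icc (R - δ) R, m ≤ U' s := by
        intro s hs
        have hs0 : 0 < s := by linarith [hs.1]
        have hXpos : (0:ℝ) < R ^ (N - 1) := pow_pos hRpos _
        have hsl := slope_le_aux w (fun t => t ^ (N - 1) * b t * f (U t)) s R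
          (R ^ (N - 1) * M * f₂) hs.2
          (ContinuousOn.mul (((continuous_pow (N-1)).continuousOn).mul hacont.continuousOn)
            (hU'c.mono (fun x hx => ⟨lt_of_lt_of_le hs0 hx.1, hx.2⟩)))
          (fun t ht => hODE t ⟨lt_trans hs0 ht.1, ht.2⟩)
          (fun t ht => by
            have ht0 : 0 < t := lt_trans hs0 ht.1
            have htmem : t ∈ Icc (0:ℝ) R := ⟨ht0.le, ht.2.le⟩
            have hfUt : f (U t) ≤ f₂ := by
              apply le_trans (hfmono (hUmono htmem ⟨hRpos.le, le_rfl⟩ ht.2.le))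
              exact hfmono hURub
            have hfUt0 : 0 ≤ f (U t) := hfnn _ (hUθ t htmem)
            have hpt : t ^ (N - 1) ≤ R ^ (N - 1) := pow_le_pow_left₀ ht0.le ht.2.le _
            have hbt : b t ≤ M := (hM t ht0.le).2
            calc t ^ (N - 1) * b t * f (U t) ≤ R ^ (N - 1) * M * f (U t) := by
                  apply mul_le_mul_of_nonneg_right _ hfUt0
                  exact mul_le_mul hpt hbt (hbpos t ht0.le).le hXpos.le
            _ ≤ R ^ (N - 1) * M * f₂ := by
                  apply mul_le_mul_of_nonneg_left hfUt (by positivity))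
        have hRs : R - s ≤ δ := by linarith [hs.1]
        have h1 : w R - w s ≤ R ^ (N - 1) * M * f₂ * δ := by
          apply le_trans hsl
          apply mul_le_mul_of_nonneg_left hRs (by positivity)
        have h2 : R ^ (N - 1) * M * f₂ * δ ≤ R ^ (N - 1) * (ca * e₂ / 2) := by
          have h3 := mul_le_mul_of_nonneg_left hδ2 hXpos.le
          linarith [h3]
        have hwRlb : R ^ (N - 1) * (ca * e₂) ≤ w R := by
          have h4 : ca * e₂ ≤ a R * U' R :=
            mul_le_mul (hca R hRpos.le).1 heUR2 he₂.le (hapos R hRpos.le).le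
          calc R ^ (N - 1) * (ca * e₂) ≤ R ^ (N - 1) * (a R * U' R) :=
                mul_le_mul_of_nonneg_left h4 hXpos.le
          _ = w R := by rw [hwdef]; ring
        have hws : R ^ (N - 1) * (ca * e₂ / 2) ≤ w s := by linarith
        have hwsub : w s ≤ R ^ (N - 1) * (M * U' s) := by
          have hU's0 : 0 ≤ U' s := hU'nn s ⟨hs0, hs.2⟩
          have hps : s ^ (N - 1) ≤ R ^ (N - 1) := pow_le_pow_left₀ hs0.le hs.2 _
          have has : a s ≤ M := (hM s hs0.le).1
          calc w s = s ^ (N - 1) * a s * U' s := rfl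
          _ ≤ R ^ (N - 1) * M * U' s := by
              apply mul_le_mul_of_nonneg_right _ hU's0
              exact mul_le_mul hps has (hapos s hs0.le).le hXpos.le
          _ = R ^ (N - 1) * (M * U' s) := by ring
        have hkey : R ^ (N - 1) * (ca * e₂ / 2) ≤ R ^ (N - 1) * (M * U' s) :=
          le_trans hws hwsub
        have hMU : ca * e₂ / 2 ≤ M * U' s := le_of_mul_le_mul_left
          (by linarith [hkey]) hXpos
        rw [hmdef, div_le_iff₀ (by positivity)]
        linarith [hMU]
      intro r hr
      have hrδ : R - δ ≤ r := by linarith [hr.1]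
      have hsl := slope_ge_aux U U' (R - δ) r m hrδ
        (hUc.mono (fun x hx => ⟨by linarith [hx.1], by linarith [hx.2, hr.2]⟩))
        (fun t ht => hUder t ⟨by linarith [ht.1], by linarith [ht.2, hr.2]⟩)
        (fun t ht => hU'lb t ⟨ht.1.le, by linarith [ht.2, hr.2]⟩)
      have hURδ : θ₀ ≤ U (R - δ) := hUθ _ ⟨by linarith, by linarith⟩
      have hgap : m * (δ / 2) ≤ m * (r - (R - δ)) := by
        apply mul_le_mul_of_nonneg_left _ hmpos.le
        linarith [hr.1]
      linarith [hsl, hκm, hgap, hURδ]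
  -- the derivative function D
  set D : ℝ → ℝ := fun x => b x * f (U x) / a x -
    (((N : ℝ) - 1) / x + deriv a x / a x) * U' x with hDdef
  have hD_int : ∀ r ∈ Ioo (0:ℝ) R, HasDerivAt U' (D r) r := by
    intro r hr
    have hr0 : 0 < r := hr.1
    have har : 0 < a r := hapos r hr0.le
    have hgne : r ^ (N - 1) * a r ≠ 0 := (mul_pos (pow_pos hr0 _) har).ne'
    have hga : HasDerivAt (fun x : ℝ => x ^ (N - 1) * a x)
        ((N - 1 : ℕ) * r ^ (N - 1 - 1) * a r + r ^ (N - 1) * deriv a r) r :=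
      (hasDerivAt_pow (N - 1) r).mul (hadiff r).hasDerivAt
    have hdiv := (hODE r hr).div hga hgne
    have heq : U' =ᶠ[nhds r] fun y => w y / (y ^ (N - 1) * a y) := by
      filter_upwards [isOpen_Ioo.mem_nhds hr] with x hx
      have hgx : x ^ (N - 1) * a x ≠ 0 :=
        (mul_pos (pow_pos hx.1 _) (hapos x hx.1.le)).ne'
      rw [hwdef]
      field_simp
      rw [mul_assoc, mul_div_cancel_right₀ _ hgx]
    have hval : HasDerivAt U'
        ((r ^ (N - 1) * b r * f (U r) * (r ^ (N - 1) * a r) -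
          w r * ((N - 1 : ℕ) * r ^ (N - 1 - 1) * a r + r ^ (N - 1) * deriv a r)) /
          (r ^ (N - 1) * a r) ^ 2) r :=
      hdiv.congr_of_eventuallyEq heq
    have hcast : ((N - 1 : ℕ) : ℝ) = (N : ℝ) - 1 := by
      have : (1:ℕ) ≤ N := by omega
      push_cast [Nat.cast_sub this]
      ring
    have hpow : r ^ (N - 1 - 1) * r = r ^ (N - 1) := by
      rw [← pow_succ]
      congr 1
      omega
    have hDval : (r ^ (N - 1) * b r * f (U r) * (r ^ (N - 1) * a r) -
          w r * ((N - 1 : ℕ) * r ^ (N - 1 - 1) * a r + r ^ (N - 1) * deriv a r)) /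
          (r ^ (N - 1) * a r) ^ 2 = D r := by
      rw [hDdef, hwdef, hcast]
      simp only []
      rw [show r ^ (N - 1) = r ^ (N - 1 - 1) * r from hpow.symm]
      have hrpow : r ^ (N - 1 - 1) ≠ 0 := pow_ne_zero _ hr0.ne'
      field_simp
    rw [← hDval]
    exact hval
  have hD_R : HasDerivWithinAt U' (D R) (Icc 0 R) R := by
    have hU'R : ContinuousWithinAt U' (Ioo 0 R) R :=
      (hU'c R ⟨hRpos, le_rfl⟩).mono Ioo_subset_Ioc_self
    have hUR : ContinuousWithinAt U (Ioo 0 R) R :=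
      (hUc R (right_mem_Icc.2 hRpos.le)).mono Ioo_subset_Icc_self
    have haR : a R ≠ 0 := (hapos R hRpos.le).ne'
    have hDcont : ContinuousWithinAt D (Ioo 0 R) R := by
      rw [hDdef]
      apply ContinuousWithinAt.sub
      · exact ((hbcont.continuousWithinAt).mul
          (hfcont.continuousAt.comp_continuousWithinAt hUR)).div
          hacont.continuousWithinAt haR
      · exact ((continuousWithinAt_const.div continuousWithinAt_id hRpos.ne').add
          ((hda_cont.continuousWithinAt).div hacont.continuousWithinAt haR)).mul hU'R
    have hDt : Tendsto D (nhdsWithin R (Ioo 0 R)) (nhds (D R)) := hDcont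
    apply HasDerivWithinAt.mono _ Icc_subset_Iic_self
    apply hasDerivWithinAt_Iic_of_tendsto_deriv (s := Ioo 0 R)
    · exact fun x hx => (hD_int x hx).differentiableAt.differentiableWithinAt
    · exact hU'R
    · exact Ioo_mem_nhdsLT_of_mem ⟨hRpos, le_rfl⟩
    · rw [← nhdsWithin_Ioo_eq_nhdsLT hRpos]
      apply hDt.congr'
      filter_upwards [self_mem_nhdsWithin] with x hx
      exact ((hD_int x hx).deriv).symm
  have hC₅R : C₅ * C₄ / R < ca * φ / M := by
    have hq : C₅ * C₄ * M / (ca * φ) < R := by linarith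
    rw [div_lt_iff₀ (by positivity)] at hq
    rw [div_lt_div_iff₀ hRpos hMpos]
    nlinarith [hq]
  have hDpos : ∀ r ∈ Icc (R - δ / 2) R, 0 < D r := by
    intro r hr
    have hr2 : R / 2 ≤ r := by linarith [hr.1, hδ1]
    have hr0 : 0 < r := lt_of_lt_of_le hR2pos hr2
    have hrR : r ≤ R := hr.2
    have har : 0 < a r := hapos r hr0.le
    have hU'r0 : 0 ≤ U' r := hU'nn r ⟨hr0, hrR⟩
    have hU'rC : U' r ≤ C₄ := hU'ub r hr2 hrR
    have hUr : θ₀ + κ ≤ U r := hUlow r hr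
    have hfUr : φ ≤ f (U r) := by
      have h1 : c₀ * κ ≤ c₀ * (U r - θ₀) :=
        mul_le_mul_of_nonneg_left (by linarith) hc₀.le
      exact le_trans h1 (hflb (U r) (by linarith))
    have term1 : ca * φ / M ≤ b r * f (U r) / a r := by
      apply div_le_div₀ (mul_nonneg (hbpos r hr0.le).le (le_trans hφpos.le hfUr))
        (mul_le_mul (hca r hr0.le).2 hfUr hφpos.le (hbpos r hr0.le).le) har
        (hM r hr0.le).1
    have habs : |deriv a r| ≤ (L + 1) / r := hR₂ r (by linarith)
    have hbr : |((N : ℝ) - 1) / r + deriv a r / a r| ≤ C₅ / R := by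
      have h1 : |((N : ℝ) - 1) / r + deriv a r / a r| ≤
          ((N : ℝ) - 1) / r + |deriv a r| / a r := by
        refine le_trans (abs_add_le _ _) ?_
        apply add_le_add
        · rw [abs_div, abs_of_nonneg (by linarith : (0:ℝ) ≤ (N:ℝ) - 1),
            abs_of_pos hr0]
        · rw [abs_div, abs_of_pos har]
      have h2 : |deriv a r| / a r ≤ ((L + 1) / ca) / r := by
        have := div_le_div₀ (by positivity : (0:ℝ) ≤ (L+1)/r) habs hcapos (hca r hr0.le).1
        calc |deriv a r| / a r ≤ ((L + 1) / r) / ca := this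
        _ = ((L + 1) / ca) / r := by ring
      have h3 : ((N : ℝ) - 1) / r ≤ ((N : ℝ) - 1) / (R / 2) :=
        div_le_div_of_nonneg_left (by linarith) hR2pos hr2
      have h4 : ((L + 1) / ca) / r ≤ ((L + 1) / ca) / (R / 2) :=
        div_le_div_of_nonneg_left (by positivity) hR2pos hr2
      have h5 : ((N : ℝ) - 1) / (R / 2) + ((L + 1) / ca) / (R / 2) = C₅ / R := by
        rw [hC₅def]
        field_simp
      linarith [h1, h2, h3, h4]
    have term2 : (((N : ℝ) - 1) / r + deriv a r / a r) * U' r ≤ (C₅ / R) * C₄ := by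
      calc (((N : ℝ) - 1) / r + deriv a r / a r) * U' r
          ≤ |((N : ℝ) - 1) / r + deriv a r / a r| * U' r :=
            mul_le_mul_of_nonneg_right (le_abs_self _) hU'r0
      _ ≤ (C₅ / R) * C₄ := mul_le_mul hbr hU'rC hU'r0 (by positivity)
    have hfin : (C₅ / R) * C₄ < ca * φ / M := by
      calc (C₅ / R) * C₄ = C₅ * C₄ / R := by ring
      _ < ca * φ / M := hC₅R
    show 0 < b r * f (U r) / a r - (((N : ℝ) - 1) / r + deriv a r / a r) * U' r
    linarith [term1, term2, hfin]
  refine ⟨R - δ / 2, ⟨le_rfl, by linarith⟩, fun r hr => ?_⟩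
  refine ⟨D r, hDpos r hr, ?_⟩
  rcases eq_or_lt_of_le hr.2 with heq | hlt
  · rw [heq]; exact hD_R
  · exact (hD_int r ⟨by linarith [hr.1], hlt⟩).hasDerivWithinAt
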